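/- arXiv:2105.06249 — 2 statements merged into one kernel-verified Lean document; each statement's English description precedes it below -/
import Mathlib

section
/- Let $T>0$, $1\leq p\leq q<+\infty$, $0<\beta<\theta<1$, and let $X:[0,T]\to\mathbb{R}^n$ be Borel with finite Gagliardo seminorm $[X]_{\theta,q}=\left(\int_0^T\int_0^T\frac{|X_t-X_\tau|^q}{|t-\tau|^{1+\theta q}}\,d\tau\,dt\right)^{1/q}<\infty$. Then the function $t\mapsto \int_0^T \frac{|X_t-X_\tau|^p}{|t-\tau|^{1+\beta p}}\,d\tau$ belongs to $L^{q/p}(0,T)$. -/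
open MeasureTheory Metric Set ENNReal

private lemma aux_real {N d : ℝ} (hN : 0 ≤ N) (hd : 0 < d) (p q β θ : ℝ) (hq0 : q ≠ 0) :
    N ^ p / d ^ (1 + β * p)
      = (N ^ q / d ^ (1 + θ * q)) ^ (p / q) * d ^ ((1 + θ * q) * (p / q) - (1 + β * p)) := by
  have h1 : q * (p / q) = p := by field_simp
  have h2 : (N ^ q) ^ (p / q) = N ^ p := by rw [← Real.rpow_mul hN, h1]
  have h3 : (d ^ (1 + θ * q)) ^ (p / q) = d ^ ((1 + θ * q) * (p / q)) :=
    (Real.rpow_mul hd.le _ _).symm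
  have he : (0:ℝ) < d ^ ((1 + θ * q) * (p / q)) := Real.rpow_pos_of_pos hd _
  rw [Real.div_rpow (Real.rpow_nonneg hN q) (Real.rpow_nonneg hd.le _), h2, h3,
    Real.rpow_sub hd, div_mul_div_comm, mul_comm (N ^ p), mul_div_mul_left _ _ he.ne']

private lemma aux_ofReal {N d : ℝ} (hN : 0 ≤ N) (hd : 0 ≤ d) (hNd : d = 0 → N = 0)
    {p q : ℝ} (β θ : ℝ) (hp0 : 0 < p) (hq0 : 0 < q) :
    ENNReal.ofReal (N ^ p / d ^ (1 + β * p))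
      = (ENNReal.ofReal (N ^ q / d ^ (1 + θ * q))) ^ (p / q)
        * ENNReal.ofReal (d ^ ((1 + θ * q) * (p / q) - (1 + β * p))) := by
  rcases eq_or_lt_of_le hd with h0 | h0
  · have hN0 : N = 0 := hNd h0.symm
    subst hN0
    rw [Real.zero_rpow hp0.ne', Real.zero_rpow hq0.ne', zero_div, zero_div,
      ENNReal.ofReal_zero, ENNReal.zero_rpow_of_pos (div_pos hp0 hq0), zero_mul]
  · have hdiv : 0 ≤ N ^ q / d ^ (1 + θ * q) :=
      div_nonneg (Real.rpow_nonneg hN _) (Real.rpow_nonneg hd _)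
    rw [aux_real hN h0 p q β θ hq0.ne',
      ENNReal.ofReal_mul (Real.rpow_nonneg hdiv _),
      ENNReal.ofReal_rpow_of_nonneg hdiv (div_nonneg hp0.le hq0.le)]

private lemma M0fin (T a : ℝ) (hT : 0 < T) (ha : -1 < a) :
    ∫⁻ u in Icc (0:ℝ) T, ENNReal.ofReal (u ^ a) < ⊤ := by
  have hres : (volume : Measure ℝ).restrict (Icc 0 T) = volume.restrict (Ioo 0 T) :=
    (Measure.restrict_congr_set Ioo_ae_eq_Icc).symm
  rw [hres]
  have hint : IntegrableOn (fun x : ℝ => x ^ a) (Ioo 0 T) :=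
    (intervalIntegral.integrableOn_Ioo_rpow_iff hT).2 ha
  calc ∫⁻ u in Ioo (0:ℝ) T, ENNReal.ofReal (u ^ a)
      ≤ ∫⁻ u in Ioo (0:ℝ) T, ‖(u : ℝ) ^ a‖₊ :=
        lintegral_mono fun u => ENNReal.ofReal_le_of_le_toReal
          (by simp [Real.norm_eq_abs]; exact (le_abs_self _).trans (by simp))
    _ < ⊤ := hint.2

private lemma Kbound {T a : ℝ} {t : ℝ} (ht : t ∈ Icc (0:ℝ) T) :
    ∫⁻ τ in Icc (0:ℝ) T, ENNReal.ofReal (|t - τ| ^ a)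
      ≤ 2 * ∫⁻ u in Icc (0:ℝ) T, ENNReal.ofReal (u ^ a) := by
  obtain ⟨ht0, htT⟩ := ht
  have p1 : ∫⁻ τ in Icc (0:ℝ) t, ENNReal.ofReal (|t - τ| ^ a)
      ≤ ∫⁻ u in Icc (0:ℝ) T, ENNReal.ofReal (u ^ a) := by
    have e1 : ∫⁻ τ in Icc (0:ℝ) t, ENNReal.ofReal (|t - τ| ^ a)
        = ∫⁻ τ in Icc (0:ℝ) t, ENNReal.ofReal ((t - τ) ^ a) := by
      refine setLIntegral_congr_fun measurableSet_Icc (fun τ hτ => ?_)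
      rw [abs_of_nonneg (by linarith [hτ.2])]
    have e2 : ∫⁻ τ in Icc (0:ℝ) t, ENNReal.ofReal ((t - τ) ^ a)
        = ∫⁻ u in Icc (0:ℝ) t, ENNReal.ofReal (u ^ a) := by
      have h := (Measure.measurePreserving_sub_left (volume : Measure ℝ)
          t).setLIntegral_comp_preimage_emb
        (MeasurableEquiv.subLeft t).measurableEmbedding
        (fun u => ENNReal.ofReal (u ^ a)) (Icc 0 t)
      have hpre : (fun τ => t - τ) ⁻¹' (Icc (0:ℝ) t) = Icc 0 t := by
        ext u
        simp only [mem_preimage, mem_Icc]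
        constructor <;> (rintro ⟨h1, h2⟩; constructor <;> linarith)
      simpa [hpre] using h
    rw [e1, e2]; exact lintegral_mono_set (Icc_subset_Icc le_rfl htT)
  have p2 : ∫⁻ τ in Icc t T, ENNReal.ofReal (|t - τ| ^ a)
      ≤ ∫⁻ u in Icc (0:ℝ) T, ENNReal.ofReal (u ^ a) := by
    have e1 : ∫⁻ τ in Icc t T, ENNReal.ofReal (|t - τ| ^ a)
        = ∫⁻ τ in Icc t T, ENNReal.ofReal ((τ - t) ^ a) := by
      refine setLIntegral_congr_fun measurableSet_Icc (fun τ hτ => ?_)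
      rw [abs_sub_comm, abs_of_nonneg (by linarith [hτ.1])]
    have e2 : ∫⁻ τ in Icc t T, ENNReal.ofReal ((τ - t) ^ a)
        = ∫⁻ u in Icc (0:ℝ) (T - t), ENNReal.ofReal (u ^ a) := by
      have h := (measurePreserving_sub_right (volume : Measure ℝ)
          t).setLIntegral_comp_preimage_emb
        (MeasurableEquiv.subRight t).measurableEmbedding
        (fun u => ENNReal.ofReal (u ^ a)) (Icc 0 (T - t))
      have hpre : (fun τ => τ - t) ⁻¹' (Icc (0:ℝ) (T - t)) = Icc t T := by
        ext u
        simp only [mem_preimage, mem_Icc]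
        constructor <;> (rintro ⟨h1, h2⟩; constructor <;> linarith)
      simpa [hpre] using h
    rw [e1, e2]; exact lintegral_mono_set (Icc_subset_Icc le_rfl (by linarith))
  have hsub : Icc (0:ℝ) T ⊆ Icc 0 t ∪ Icc t T := by
    intro x hx; rcases le_total x t with h | h
    · exact Or.inl ⟨hx.1, h⟩
    · exact Or.inr ⟨h, hx.2⟩
  calc ∫⁻ τ in Icc (0:ℝ) T, ENNReal.ofReal (|t - τ| ^ a)
      ≤ ∫⁻ τ in Icc (0:ℝ) t ∪ Icc t T, ENNReal.ofReal (|t - τ| ^ a) :=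
        lintegral_mono_set hsub
    _ ≤ (∫⁻ τ in Icc (0:ℝ) t, ENNReal.ofReal (|t - τ| ^ a))
          + ∫⁻ τ in Icc t T, ENNReal.ofReal (|t - τ| ^ a) := lintegral_union_le _ _ _
    _ ≤ (∫⁻ u in Icc (0:ℝ) T, ENNReal.ofReal (u ^ a))
          + ∫⁻ u in Icc (0:ℝ) T, ENNReal.ofReal (u ^ a) := add_le_add p1 p2
    _ = 2 * ∫⁻ u in Icc (0:ℝ) T, ENNReal.ofReal (u ^ a) := (two_mul _).symm

/-- if `X` has finite `(θ,q)`-Gagliardo seminorm on `(0,T)`, then the function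
`t ↦ ∫₀ᵀ |X_t - X_τ|^p / |t-τ|^{1+βp} dτ` lies in `L^{q/p}(0,T)`. -/
theorem stmt_5 (n : ℕ) (T p q β θ : ℝ) (hT : 0 < T) (hp : 1 ≤ p) (hpq : p ≤ q)
    (hβ0 : 0 < β) (hβθ : β < θ) (hθ : θ < 1)
    (X : ℝ → EuclideanSpace ℝ (Fin n)) (hX : Measurable X)
    (hGag : ∫⁻ t in Icc (0 : ℝ) T, ∫⁻ τ in Icc (0 : ℝ) T,
      ENNReal.ofReal (‖X t - X τ‖ ^ q / |t - τ| ^ (1 + θ * q)) < ⊤) :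
    ∫⁻ t in Icc (0 : ℝ) T,
      (∫⁻ τ in Icc (0 : ℝ) T,
        ENNReal.ofReal (‖X t - X τ‖ ^ p / |t - τ| ^ (1 + β * p))) ^ (q / p) < ⊤ := by
  have hp0 : 0 < p := lt_of_lt_of_le one_pos hp
  have hq0 : 0 < q := lt_of_lt_of_le hp0 hpq
  have hNd : ∀ t τ : ℝ, |t - τ| = 0 → ‖X t - X τ‖ = 0 := by
    intro t τ h
    have : t = τ := by rwa [abs_eq_zero, sub_eq_zero] at h
    simp [this]
  rcases eq_or_lt_of_le hpq with rfl | hplt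
  · -- case q = p
    have hpp : p / p = 1 := div_self hp0.ne'
    have hepos : (0:ℝ) < (θ - β) * p := mul_pos (sub_pos.2 hβθ) hp0
    have key : ∀ t ∈ Icc (0:ℝ) T,
        (∫⁻ τ in Icc (0:ℝ) T, ENNReal.ofReal (‖X t - X τ‖ ^ p / |t - τ| ^ (1 + β * p)))
          ≤ (∫⁻ τ in Icc (0:ℝ) T, ENNReal.ofReal (‖X t - X τ‖ ^ p / |t - τ| ^ (1 + θ * p)))
            * ENNReal.ofReal (T ^ ((θ - β) * p)) := by
      intro t ht
      calc ∫⁻ τ in Icc (0:ℝ) T, ENNReal.ofReal (‖X t - X τ‖ ^ p / |t - τ| ^ (1 + β * p))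
          ≤ ∫⁻ τ in Icc (0:ℝ) T, ENNReal.ofReal (‖X t - X τ‖ ^ p / |t - τ| ^ (1 + θ * p))
              * ENNReal.ofReal (T ^ ((θ - β) * p)) := by
            refine setLIntegral_mono' measurableSet_Icc fun τ hτ => ?_
            rw [aux_ofReal (norm_nonneg _) (abs_nonneg _) (hNd t τ) β θ hp0 hp0, hpp,
              ENNReal.rpow_one, show (1 + θ * p) * 1 - (1 + β * p) = (θ - β) * p by ring]
            refine mul_le_mul_right (ENNReal.ofReal_le_ofReal ?_) _
            refine Real.rpow_le_rpow (abs_nonneg _) ?_ hepos.le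
            rw [abs_le]
            constructor <;>
              [linarith [ht.1, ht.2, hτ.1, hτ.2]; linarith [ht.1, ht.2, hτ.1, hτ.2]]
        _ = _ := lintegral_mul_const' _ _ ENNReal.ofReal_ne_top
    calc ∫⁻ t in Icc (0:ℝ) T,
          (∫⁻ τ in Icc (0:ℝ) T, ENNReal.ofReal (‖X t - X τ‖ ^ p / |t - τ| ^ (1 + β * p)))
            ^ (p / p)
        = ∫⁻ t in Icc (0:ℝ) T,
            ∫⁻ τ in Icc (0:ℝ) T, ENNReal.ofReal (‖X t - X τ‖ ^ p / |t - τ| ^ (1 + β * p)) := by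
          simp [hpp]
      _ ≤ ∫⁻ t in Icc (0:ℝ) T,
            (∫⁻ τ in Icc (0:ℝ) T, ENNReal.ofReal (‖X t - X τ‖ ^ p / |t - τ| ^ (1 + θ * p)))
              * ENNReal.ofReal (T ^ ((θ - β) * p)) :=
          setLIntegral_mono' measurableSet_Icc key
      _ = (∫⁻ t in Icc (0:ℝ) T,
            ∫⁻ τ in Icc (0:ℝ) T, ENNReal.ofReal (‖X t - X τ‖ ^ p / |t - τ| ^ (1 + θ * p)))
              * ENNReal.ofReal (T ^ ((θ - β) * p)) :=
          lintegral_mul_const' _ _ ENNReal.ofReal_ne_top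
      _ < ⊤ := ENNReal.mul_lt_top hGag ENNReal.ofReal_lt_top
  · -- case p < q
    set s : ℝ := q / p with hs
    have hs1 : 1 < s := (one_lt_div hp0).2 hplt
    have hs0 : 0 < s := lt_trans one_pos hs1
    have hconj : s.HolderConjugate (Real.conjExponent s) := Real.HolderConjugate.conjExponent hs1
    set s' : ℝ := Real.conjExponent s with hs'
    have hs'0 : 0 < s' := hconj.symm.pos
    have hqp : 0 < q - p := sub_pos.2 hplt
    have hs'val : s' = q / (q - p) := by
      rw [hs', Real.conjExponent, hs]
      rw [show q / p - 1 = (q - p) / p by field_simp]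
      rw [div_div_div_eq]
      rw [mul_comm q p, mul_div_mul_left _ _ hp0.ne']
    set r : ℝ := (1 + θ * q) * (p / q) - (1 + β * p) with hr
    set a : ℝ := r * s' with ha
    have haval : a = (θ - β) * p * q / (q - p) - 1 := by
      rw [ha, hr, hs'val]
      field_simp
      ring
    have ha1 : -1 < a := by
      have h1 : 0 < (θ - β) * p * q / (q - p) :=
        div_pos (mul_pos (mul_pos (sub_pos.2 hβθ) hp0) hq0) hqp
      rw [haval]; linarith
    have hps : p / q = 1 / s := by rw [hs, one_div_div]
    -- the constant
    set M : ℝ≥0∞ := 2 * ∫⁻ u in Icc (0:ℝ) T, ENNReal.ofReal (u ^ a) with hM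
    have hMlt : M < ⊤ := by
      rw [hM]
      exact ENNReal.mul_lt_top (by norm_num) (M0fin T a hT ha1)
    -- Hölder for fixed t
    have key : ∀ t ∈ Icc (0:ℝ) T,
        (∫⁻ τ in Icc (0:ℝ) T, ENNReal.ofReal (‖X t - X τ‖ ^ p / |t - τ| ^ (1 + β * p)))
          ≤ (∫⁻ τ in Icc (0:ℝ) T,
              ENNReal.ofReal (‖X t - X τ‖ ^ q / |t - τ| ^ (1 + θ * q))) ^ (1 / s)
            * M ^ (1 / s') := by
      intro t ht
      have hFmeas : Measurable fun τ =>
          ENNReal.ofReal (‖X t - X τ‖ ^ q / |t - τ| ^ (1 + θ * q)) := by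
        apply Measurable.ennreal_ofReal
        exact ((measurable_const.sub hX).norm.pow_const q).div
          ((measurable_const.sub measurable_id).abs.pow_const (1 + θ * q))
      have hGmeas : Measurable fun τ : ℝ => ENNReal.ofReal (|t - τ| ^ r) :=
        ((measurable_const.sub measurable_id).abs.pow_const r).ennreal_ofReal
      have hfactor : (∫⁻ τ in Icc (0:ℝ) T,
            ENNReal.ofReal (‖X t - X τ‖ ^ p / |t - τ| ^ (1 + β * p)))
          = ∫⁻ τ in Icc (0:ℝ) T,
              (ENNReal.ofReal (‖X t - X τ‖ ^ q / |t - τ| ^ (1 + θ * q))) ^ (1 / s)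
                * ENNReal.ofReal (|t - τ| ^ r) := by
        refine lintegral_congr fun τ => ?_
        rw [aux_ofReal (norm_nonneg _) (abs_nonneg _) (hNd t τ) β θ hp0 hq0,
          show (1 + θ * q) * (p / q) - (1 + β * p) = r from hr.symm, hps]
      have holder := ENNReal.lintegral_mul_le_Lp_mul_Lq
        ((volume : Measure ℝ).restrict (Icc 0 T)) hconj
        ((hFmeas.pow_const (1 / s)).aemeasurable) hGmeas.aemeasurable
      rw [hfactor]
      refine le_trans holder ?_
      have e1 : ∫⁻ τ in Icc (0:ℝ) T,
            ((ENNReal.ofReal (‖X t - X τ‖ ^ q / |t - τ| ^ (1 + θ * q))) ^ (1 / s)) ^ s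
          = ∫⁻ τ in Icc (0:ℝ) T,
              ENNReal.ofReal (‖X t - X τ‖ ^ q / |t - τ| ^ (1 + θ * q)) := by
        refine lintegral_congr fun τ => ?_
        rw [← ENNReal.rpow_mul, one_div, inv_mul_cancel₀ hs0.ne', ENNReal.rpow_one]
      have e2 : ∫⁻ τ in Icc (0:ℝ) T, (ENNReal.ofReal (|t - τ| ^ r)) ^ s'
          = ∫⁻ τ in Icc (0:ℝ) T, ENNReal.ofReal (|t - τ| ^ a) := by
        refine lintegral_congr fun τ => ?_
        rw [ENNReal.ofReal_rpow_of_nonneg (Real.rpow_nonneg (abs_nonneg _) _) hs'0.le,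
          ← Real.rpow_mul (abs_nonneg _), ← ha]
      rw [e1, e2]
      exact mul_le_mul_right (ENNReal.rpow_le_rpow (Kbound ht) (by positivity)) _
    -- conclude
    have keypow : ∀ t ∈ Icc (0:ℝ) T,
        (∫⁻ τ in Icc (0:ℝ) T,
          ENNReal.ofReal (‖X t - X τ‖ ^ p / |t - τ| ^ (1 + β * p))) ^ s
          ≤ (∫⁻ τ in Icc (0:ℝ) T,
              ENNReal.ofReal (‖X t - X τ‖ ^ q / |t - τ| ^ (1 + θ * q)))
            * M ^ (s / s') := by
      intro t ht
      calc (∫⁻ τ in Icc (0:ℝ) T,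
            ENNReal.ofReal (‖X t - X τ‖ ^ p / |t - τ| ^ (1 + β * p))) ^ s
          ≤ ((∫⁻ τ in Icc (0:ℝ) T,
              ENNReal.ofReal (‖X t - X τ‖ ^ q / |t - τ| ^ (1 + θ * q))) ^ (1 / s)
              * M ^ (1 / s')) ^ s :=
            ENNReal.rpow_le_rpow (key t ht) hs0.le
        _ = (∫⁻ τ in Icc (0:ℝ) T,
              ENNReal.ofReal (‖X t - X τ‖ ^ q / |t - τ| ^ (1 + θ * q)))
            * M ^ (s / s') := by
            rw [ENNReal.mul_rpow_of_nonneg _ _ hs0.le, ← ENNReal.rpow_mul,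
              ← ENNReal.rpow_mul, one_div, inv_mul_cancel₀ hs0.ne', ENNReal.rpow_one,
              one_div, inv_mul_eq_div]
    have hMc : M ^ (s / s') ≠ ⊤ :=
      (ENNReal.rpow_lt_top_of_nonneg (by positivity) hMlt.ne).ne
    calc ∫⁻ t in Icc (0:ℝ) T,
          (∫⁻ τ in Icc (0:ℝ) T,
            ENNReal.ofReal (‖X t - X τ‖ ^ p / |t - τ| ^ (1 + β * p))) ^ s
        ≤ ∫⁻ t in Icc (0:ℝ) T,
            (∫⁻ τ in Icc (0:ℝ) T,
              ENNReal.ofReal (‖X t - X τ‖ ^ q / |t - τ| ^ (1 + θ * q)))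
              * M ^ (s / s') := setLIntegral_mono' measurableSet_Icc keypow
      _ = (∫⁻ t in Icc (0:ℝ) T,
            ∫⁻ τ in Icc (0:ℝ) T,
              ENNReal.ofReal (‖X t - X τ‖ ^ q / |t - τ| ^ (1 + θ * q)))
              * M ^ (s / s') := lintegral_mul_const' _ _ hMc
      _ < ⊤ := ENNReal.mul_lt_top hGag (lt_top_iff_ne_top.2 hMc)
end

section
/- Let $I$ be a bounded interval, $X:I\to\mathbb{R}^n$ a bounded Borel path with occupation measure $\mu_X^I$, and let $1<p\leq+\infty$, $-\frac{n}{p}<\alpha<n-\frac{n}{p}$. Then there is a constant $K>0$ depending only on $n,p,\alpha$ such that $\operatorname{diam}(X(I))^{\alpha+n/p}\geq K\,\mathcal{L}^1(I)/\||\xi|^{\alpha}\hat{\mu}_X^I\|_{L^p(\mathbb{R}^n)}$. -/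
/-!
If the occupation measure `μ` of `X` on `I` lives on a set of diameter `D`, then for
`‖ξ‖ ≤ 1 / D` every phase `⟨x, ξ⟩` on the support is within `1` of a fixed one, so
`|μ̂(ξ)| ≥ (2π)^{-n/2} cos 1 · |I|`. Integrating over the annulus `r ≤ ‖ξ‖ ≤ 2r` with
`r = 1 / (2D)` gives `‖‖ξ‖^α μ̂‖_p ≳ |I| r^{α + n/p}`, which is the claim. When `D = 0` the same
bound holds for every `r`, and `α + n/p > 0` forces the norm to be infinite.
-/

open MeasureTheory Metric Set ENNReal

noncomputable def fourierMeasure (n : ℕ) (μ : Measure (EuclideanSpace ℝ (Fin n)))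
    (ξ : EuclideanSpace ℝ (Fin n)) : ℂ :=
  ((((2 * Real.pi) ^ (-(n : ℝ) / 2) : ℝ)) : ℂ) *
    ∫ x, Complex.exp (-(Complex.I * ((inner ℝ x ξ : ℝ) : ℂ))) ∂μ

lemma cos_one_mul_measureReal_univ_le_norm_integral_exp {Ω : Type*} [MeasurableSpace Ω]
    {μ : Measure Ω} [IsFiniteMeasure μ] {θ : Ω → ℝ} (hθm : AEMeasurable θ μ)
    (hθ : ∀ᵐ x ∂μ, |θ x| ≤ 1) :
    Real.cos 1 * μ.real univ ≤ ‖∫ x, Complex.exp (θ x * Complex.I) ∂μ‖ := by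
  have hcos : Integrable (fun x => Real.cos (θ x)) μ :=
    .of_bound (Real.continuous_cos.measurable.comp_aemeasurable hθm).aestronglyMeasurable 1
      (.of_forall fun x => by simpa using Real.abs_cos_le_one (θ x))
  have hexp : Integrable (fun x => Complex.exp (θ x * Complex.I)) μ :=
    .of_bound (by fun_prop) 1 (.of_forall fun x => (Complex.norm_exp_ofReal_mul_I _).le)
  calc Real.cos 1 * μ.real univ = ∫ _, Real.cos 1 ∂μ := by
        rw [integral_const, smul_eq_mul, mul_comm]
    _ ≤ ∫ x, Real.cos (θ x) ∂μ := by
      refine integral_mono_ae (integrable_const _) hcos (hθ.mono fun x hx => ?_)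
      show Real.cos 1 ≤ Real.cos (θ x)
      rw [← Real.cos_abs (θ x)]
      exact Real.cos_le_cos_of_nonneg_of_le_pi (abs_nonneg _) (by linarith [Real.pi_gt_three]) hx
    _ = (∫ x, Complex.exp (θ x * Complex.I) ∂μ).re := by
      simp only [← Complex.exp_ofReal_mul_I_re, ← RCLike.re_to_complex, integral_re hexp]
    _ ≤ _ := Complex.re_le_norm _

lemma cos_one_mul_measureReal_univ_le_norm_integral_exp_inner {E : Type*}
    [NormedAddCommGroup E] [InnerProductSpace ℝ E] [MeasurableSpace E] [OpensMeasurableSpace E]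
    {μ : Measure E} [IsFiniteMeasure μ] {s : Set E} (hs : Bornology.IsBounded s)
    (hμs : ∀ᵐ x ∂μ, x ∈ s) {ξ : E} (hξ : diam s * ‖ξ‖ ≤ 1) :
    Real.cos 1 * μ.real univ ≤
      ‖∫ x, Complex.exp (-(Complex.I * ((inner ℝ x ξ : ℝ) : ℂ))) ∂μ‖ := by
  rcases eq_zero_or_neZero μ with rfl | hμ
  · simp
  have : (ae μ).NeBot := ae_neBot.2 hμ.out
  obtain ⟨x₀, hx₀⟩ := hμs.exists
  have hshift : ∀ x, Complex.exp (-(Complex.I * ((inner ℝ x ξ : ℝ) : ℂ))) =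
      Complex.exp ((-inner ℝ (x - x₀) ξ : ℝ) * Complex.I) *
        Complex.exp ((-inner ℝ x₀ ξ : ℝ) * Complex.I) := by
    intro x
    rw [← Complex.exp_add, inner_sub_left]
    push_cast
    ring_nf
  simp_rw [hshift, integral_mul_const, norm_mul, Complex.norm_exp_ofReal_mul_I, mul_one]
  refine cos_one_mul_measureReal_univ_le_norm_integral_exp
    (by fun_prop : Continuous fun x => -inner ℝ (x - x₀) ξ).measurable.aemeasurable ?_
  filter_upwards [hμs] with x hx
  calc |-inner ℝ (x - x₀) ξ| ≤ ‖x - x₀‖ * ‖ξ‖ := by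
        rw [abs_neg]
        exact abs_real_inner_le_norm _ _
    _ ≤ diam s * ‖ξ‖ := by
        gcongr
        exact (dist_eq_norm x x₀).symm.le.trans (dist_le_diam_of_mem hs hx hx₀)
    _ ≤ 1 := hξ

lemma le_norm_fourierMeasure {n : ℕ} {μ : Measure (EuclideanSpace ℝ (Fin n))}
    [IsFiniteMeasure μ] {s : Set (EuclideanSpace ℝ (Fin n))} (hs : Bornology.IsBounded s)
    (hμs : ∀ᵐ x ∂μ, x ∈ s) {ξ : EuclideanSpace ℝ (Fin n)} (hξ : diam s * ‖ξ‖ ≤ 1) :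
    (2 * Real.pi) ^ (-(n : ℝ) / 2) * Real.cos 1 * μ.real univ ≤ ‖fourierMeasure n μ ξ‖ := by
  rw [fourierMeasure, norm_mul, Complex.norm_real, Real.norm_of_nonneg (by positivity),
    mul_assoc]
  gcongr
  exact cos_one_mul_measureReal_univ_le_norm_integral_exp_inner hs hμs hξ

lemma addHaar_closedBall_diff_ball {E : Type*} [NormedAddCommGroup E] [NormedSpace ℝ E]
    [MeasurableSpace E] [BorelSpace E] [FiniteDimensional ℝ E] [Nontrivial E] (μ : Measure E)
    [μ.IsAddHaarMeasure] (x : E) {r R : ℝ} (hr : 0 ≤ r) (hrR : r ≤ R) :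
    μ (closedBall x R \ ball x r) =
      ENNReal.ofReal (R ^ Module.finrank ℝ E - r ^ Module.finrank ℝ E) * μ (ball 0 1) := by
  rw [measure_sdiff (ball_subset_closedBall.trans (closedBall_subset_closedBall hrR))
      measurableSet_ball.nullMeasurableSet measure_ball_lt_top.ne,
    μ.addHaar_closedBall x (hr.trans hrR), μ.addHaar_ball x hr,
    ← ENNReal.sub_mul fun _ _ => measure_ball_lt_top.ne, ENNReal.ofReal_sub _ (by positivity)]

lemma ofReal_mul_measure_rpow_le_eLpNorm {Ω F : Type*} [MeasurableSpace Ω]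
    [NormedAddCommGroup F] {μ : Measure Ω} {p : ℝ≥0∞} (hp : p ≠ 0) {S : Set Ω}
    (hS : MeasurableSet S) (hμS : μ S ≠ 0) {f : Ω → F} {c : ℝ} (hc : 0 ≤ c)
    (hf : ∀ x ∈ S, c ≤ ‖f x‖) :
    ENNReal.ofReal c * μ S ^ (1 / p.toReal) ≤ eLpNorm f p μ := by
  rw [← Real.enorm_of_nonneg hc, ← eLpNorm_indicator_const' hS hμS hp]
  refine eLpNorm_mono fun x => ?_
  by_cases hx : x ∈ S
  · simpa [hx, abs_of_nonneg hc] using hf x hx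
  · simp [hx]

lemma min_one_two_rpow_mul_rpow_le {r x : ℝ} (α : ℝ) (hr : 0 < r) (hrx : r ≤ x)
    (hx : x ≤ 2 * r) : min 1 (2 ^ α) * r ^ α ≤ x ^ α := by
  rcases le_or_gt 0 α with hα | hα
  · calc min 1 (2 ^ α) * r ^ α ≤ 1 * r ^ α := by gcongr; exact min_le_left _ _
      _ ≤ x ^ α := by rw [one_mul]; exact Real.rpow_le_rpow hr.le hrx hα
  · calc min 1 (2 ^ α) * r ^ α ≤ 2 ^ α * r ^ α := by gcongr; exact min_le_right _ _
      _ = (2 * r) ^ α := (Real.mul_rpow zero_le_two hr.le).symm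
      _ ≤ x ^ α := Real.rpow_le_rpow_of_nonpos (hr.trans_le hrx) hx hα.le

lemma two_pow_sub_one_mul_volume_ball_pos {n : ℕ} (hn : 0 < n) :
    0 < (2 ^ n - 1) * volume.real (ball (0 : EuclideanSpace ℝ (Fin n)) 1) := by
  have : Nonempty (Fin n) := ⟨⟨0, hn⟩⟩
  have h2n : (1 : ℝ) < 2 ^ n := one_lt_pow₀ (by norm_num) hn.ne'
  exact mul_pos (by linarith)
    (ENNReal.toReal_pos (measure_ball_pos volume 0 one_pos).ne' measure_ball_lt_top.ne)

/-- `(2 ^ n - 1) * volume.real (ball 0 1)` is the volume of the annulus `1 ≤ ‖ξ‖ ≤ 2`. -/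
noncomputable def bermanConst (n : ℕ) (p : ℝ≥0∞) (α : ℝ) : ℝ :=
  (2 * Real.pi) ^ (-(n : ℝ) / 2) * Real.cos 1 * min 1 (2 ^ α) *
    ((2 ^ n - 1) * volume.real (ball (0 : EuclideanSpace ℝ (Fin n)) 1)) ^ (1 / p.toReal)

lemma bermanConst_pos {n : ℕ} (hn : 0 < n) (p : ℝ≥0∞) (α : ℝ) : 0 < bermanConst n p α := by
  have := Real.cos_one_pos
  have := two_pow_sub_one_mul_volume_ball_pos hn
  unfold bermanConst
  positivity

lemma ofReal_mul_rpow_le_eLpNorm_fourierMeasure {n : ℕ} (hn : 0 < n) {p : ℝ≥0∞}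
    (hp : p ≠ 0) (α : ℝ) {μ : Measure (EuclideanSpace ℝ (Fin n))} [IsFiniteMeasure μ]
    {s : Set (EuclideanSpace ℝ (Fin n))} (hs : Bornology.IsBounded s)
    (hμs : ∀ᵐ x ∂μ, x ∈ s) {r : ℝ} (hr : 0 < r) (hsr : 2 * diam s * r ≤ 1) :
    ENNReal.ofReal (bermanConst n p α * μ.real univ * r ^ (α + n / p.toReal)) ≤
      eLpNorm (fun ξ => ‖ξ‖ ^ α * ‖fourierMeasure n μ ξ‖) p volume := by
  have : Nonempty (Fin n) := ⟨⟨0, hn⟩⟩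
  set S := closedBall (0 : EuclideanSpace ℝ (Fin n)) (2 * r) \ ball 0 r
  set a := (2 ^ n - 1) * volume.real (ball (0 : EuclideanSpace ℝ (Fin n)) 1) with ha_def
  set c := (2 * Real.pi) ^ (-(n : ℝ) / 2) * Real.cos 1 * μ.real univ with hc_def
  have ha : 0 < a := two_pow_sub_one_mul_volume_ball_pos hn
  have hc : 0 ≤ c := by
    have := Real.cos_one_pos
    positivity
  have hvolS : volume S = ENNReal.ofReal (a * r ^ n) := by
    rw [addHaar_closedBall_diff_ball volume 0 hr.le (by linarith), finrank_euclideanSpace_fin,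
      ← ofReal_measureReal measure_ball_lt_top.ne,
      ← ENNReal.ofReal_mul (sub_nonneg.2 (pow_le_pow_left₀ hr.le (by linarith) n))]
    congr 1
    ring
  have hlow : ∀ ξ ∈ S, min 1 (2 ^ α) * r ^ α * c ≤ ‖‖ξ‖ ^ α * ‖fourierMeasure n μ ξ‖‖ := by
    rintro ξ ⟨hξ2r, hξr⟩
    rw [mem_closedBall_zero_iff] at hξ2r
    rw [mem_ball_zero_iff, not_lt] at hξr
    refine le_trans ?_ (Real.le_norm_self _)
    refine mul_le_mul (min_one_two_rpow_mul_rpow_le α hr hξr hξ2r)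
      (le_norm_fourierMeasure hs hμs ?_) hc (Real.rpow_nonneg (norm_nonneg _) _)
    nlinarith [diam_nonneg (s := s)]
  calc ENNReal.ofReal (bermanConst n p α * μ.real univ * r ^ (α + n / p.toReal))
      = ENNReal.ofReal (min 1 (2 ^ α) * r ^ α * c) * volume S ^ (1 / p.toReal) := by
        rw [hvolS, ofReal_rpow_of_nonneg (by positivity) (by positivity),
          ← ENNReal.ofReal_mul (by positivity), Real.mul_rpow ha.le (by positivity),
          ← Real.rpow_natCast, ← Real.rpow_mul hr.le, Real.rpow_add hr, bermanConst,
          ← ha_def, hc_def]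
        ring_nf
    _ ≤ _ := ofReal_mul_measure_rpow_le_eLpNorm hp
        (measurableSet_closedBall.diff measurableSet_ball)
        (by rw [hvolS]; exact (ENNReal.ofReal_pos.2 (by positivity)).ne') (by positivity) hlow

lemma div_le_ofReal_rpow_of_forall_ofReal_mul_rpow_le {D β c : ℝ} {N : ℝ≥0∞} (hD : 0 ≤ D)
    (hβ : 0 < β) (hc : 0 < c)
    (h : ∀ r, 0 < r → 2 * D * r ≤ 1 → ENNReal.ofReal (c * r ^ β) ≤ N) :
    ENNReal.ofReal (2 ^ (-β) * c) / N ≤ ENNReal.ofReal (D ^ β) := by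
  rcases hD.eq_or_lt with rfl | hD
  · suffices N = ⊤ by simp [this]
    refine ENNReal.eq_top_of_forall_nnreal_le fun t => ?_
    have ht : 0 < (t + 1 : ℝ) / c := by positivity
    have hr := h (((t + 1 : ℝ) / c) ^ β⁻¹) (by positivity) (by simp)
    rw [← Real.rpow_mul ht.le, inv_mul_cancel₀ hβ.ne', Real.rpow_one,
      mul_div_cancel₀ _ hc.ne'] at hr
    calc (t : ℝ≥0∞) ≤ ENNReal.ofReal (t + 1) := by
          rw [← ENNReal.ofReal_coe_nnreal]
          exact ENNReal.ofReal_le_ofReal (by linarith)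
      _ ≤ N := hr
  · refine ENNReal.div_le_of_le_mul ?_
    have hr := h (2 * D)⁻¹ (by positivity) (by rw [mul_inv_cancel₀ (by positivity)])
    calc ENNReal.ofReal (2 ^ (-β) * c)
        = ENNReal.ofReal (D ^ β) * ENNReal.ofReal (c * (2 * D)⁻¹ ^ β) := by
          rw [← ENNReal.ofReal_mul (by positivity), Real.inv_rpow (by positivity),
            Real.mul_rpow zero_le_two hD.le, Real.rpow_neg zero_le_two]
          congr 1
          field_simp
      _ ≤ ENNReal.ofReal (D ^ β) * N := by gcongr

lemma ae_map_restrict_mem_closure_image {Ω E : Type*} [MeasurableSpace Ω]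
    [TopologicalSpace E] [MeasurableSpace E] [OpensMeasurableSpace E] {ν : Measure Ω} {X : Ω → E}
    (hX : Measurable X) {I : Set Ω} (hI : MeasurableSet I) :
    ∀ᵐ x ∂(ν.restrict I).map X, x ∈ closure (X '' I) :=
  (ae_map_iff hX.aemeasurable isClosed_closure.measurableSet).2 <|
    (ae_restrict_mem hI).mono fun _ ht => subset_closure (mem_image_of_mem X ht)

theorem stmt_7_general (n : ℕ) (hn : 0 < n) (p : ℝ≥0∞) (hp : 1 < p) (α : ℝ)
    (hα1 : -((n : ℝ) / p.toReal) < α) :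
    ∃ K : ℝ, 0 < K ∧ ∀ A B : ℝ, A < B →
      ∀ X : ℝ → EuclideanSpace ℝ (Fin n), Measurable X →
        Bornology.IsBounded (X '' Icc A B) →
        ENNReal.ofReal (Metric.diam (X '' Icc A B) ^ (α + (n : ℝ) / p.toReal)) ≥
          ENNReal.ofReal K * volume (Icc A B) /
            eLpNorm (fun ξ => ‖ξ‖ ^ α *
              ‖(fourierMeasure n ((volume.restrict (Icc A B)).map X) ξ)‖) p volume := by
  have hC := bermanConst_pos hn p α
  refine ⟨2 ^ (-(α + n / p.toReal)) * bermanConst n p α, by positivity, ?_⟩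
  intro A B hAB X hX hbd
  have : IsFiniteMeasure ((volume : Measure ℝ).restrict (Icc A B)) :=
    isFiniteMeasure_restrict.2 measure_Icc_lt_top.ne
  have hmass : (((volume : Measure ℝ).restrict (Icc A B)).map X).real univ = B - A := by
    rw [map_measureReal_apply hX MeasurableSet.univ, preimage_univ,
      measureReal_restrict_apply_univ, Real.volume_real_Icc_of_le hAB.le]
  have key := div_le_ofReal_rpow_of_forall_ofReal_mul_rpow_le (β := α + n / p.toReal)
    diam_nonneg (by linarith) (mul_pos hC (sub_pos.2 hAB)) fun r hr hDr => by
      simpa only [hmass] using ofReal_mul_rpow_le_eLpNorm_fourierMeasure hn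
        (zero_lt_one.trans hp).ne' α hbd.closure
        (ae_map_restrict_mem_closure_image (ν := volume) hX measurableSet_Icc)
        hr (by rwa [diam_closure])
  rwa [Real.volume_Icc, ← ENNReal.ofReal_mul (by positivity), mul_assoc]

/-- Berman's diameter inequality for the range of a bounded Borel path in terms
of the Fourier regularity of its occupation measure. -/
theorem stmt_7 (n : ℕ) (hn : 0 < n) (p : ℝ≥0∞) (hp : 1 < p) (α : ℝ)
    (hα1 : -((n : ℝ) / p.toReal) < α) (hα2 : α < (n : ℝ) - n / p.toReal) :
    ∃ K : ℝ, 0 < K ∧ ∀ A B : ℝ, A < B →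
      ∀ X : ℝ → EuclideanSpace ℝ (Fin n), Measurable X →
        Bornology.IsBounded (X '' Icc A B) →
        ENNReal.ofReal (Metric.diam (X '' Icc A B) ^ (α + (n : ℝ) / p.toReal)) ≥
          ENNReal.ofReal K * volume (Icc A B) /
            eLpNorm (fun ξ => ‖ξ‖ ^ α *
              ‖(fourierMeasure n ((volume.restrict (Icc A B)).map X) ξ)‖) p volume :=
  stmt_7_general n hn p hp α hα1
end
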